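/- Let f be L-smooth convex with minimizer x_⋆ and x₀ ∈ ℝ^d. Suppose z is an auxiliary vector for x with pre-rate τ > 0. Let δ = (1+√(1+4τ))/2, τ' = τ + δ, x' = (τ/τ')x⁺ + (δ/τ')z, and z' = z − (δ/L)∇f(x'). Then f(x') − f(x_⋆) + (L/(2τ'))‖z'−x_⋆‖² ≤ (L/(2τ'))‖x₀−x_⋆‖²; in particular f(x') − f(x_⋆) ≤ (L/(2τ'))‖x₀−x_⋆‖². -/

import Mathlib

/-!
Write `x⁺ = x - ∇f(x)/L` and `τ' = τ + δ`. For an `L`-smooth convex function, every pair of points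
satisfies the interpolation inequality
`f y + ⟪∇f y, u - y⟫ + ‖∇f u - ∇f y‖² / (2L) ≤ f u`.
Adding `τ/τ'` times the pre-rate bound, `δ/τ'` times the interpolation inequality at `(x⋆, x')`
and `τ/τ'` times the one at `(x, x')` gives the new bound exactly: the inner products cancel
because `τ' x' = τ x⁺ + δ z`, and the `‖∇f(x')‖²` terms cancel because `δ² = τ'`.
The interpolation inequality itself comes from the descent lemma applied to
`w ↦ f w - ⟪∇f y, w⟫`, which is `L`-smooth, convex and minimal at `y`.
-/

open InnerProductSpace Set

open scoped RealInnerProductSpace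

theorem one_add_sqrt_div_two_sq {τ : ℝ} (hτ : 0 ≤ 1 + 4 * τ) :
    ((1 + √(1 + 4 * τ)) / 2) ^ 2 = τ + (1 + √(1 + 4 * τ)) / 2 := by
  linear_combination Real.sq_sqrt hτ / 4

variable {F : Type*} [NormedAddCommGroup F] [InnerProductSpace ℝ F]

section Gradient

variable [CompleteSpace F] {f : F → ℝ} {f' : F → F} {g : F} {L : ℝ}

theorem HasGradientAt.hasDerivAt_comp_add_smul {a v : F} {t : ℝ}
    (h : HasGradientAt f g (a + t • v)) :
    HasDerivAt (fun s : ℝ => f (a + s • v)) ⟪g, v⟫ t := by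
  have hline : HasDerivAt (fun s : ℝ => a + s • v) v t := by
    simpa using ((hasDerivAt_id t).smul_const v).const_add a
  have := h.hasFDerivAt.comp_hasDerivAt t hline
  simp only [Function.comp_def, toDual_apply_apply] at this
  exact this

theorem HasGradientAt.sub_inner_const {a : F} (h : HasGradientAt f g a) (c : F) :
    HasGradientAt (fun w => f w - ⟪c, w⟫) (g - c) a := by
  rw [hasGradientAt_iff_hasFDerivAt, map_sub]
  exact h.hasFDerivAt.sub (toDual ℝ F c).hasFDerivAt

theorem IsLocalMin.hasGradientAt_eq_zero {a : F} (h : IsLocalMin f a)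
    (hg : HasGradientAt f g a) : g = 0 :=
  (toDual ℝ F).map_eq_zero_iff.mp (h.hasFDerivAt_eq_zero hg.hasFDerivAt)

theorem ConvexOn.add_inner_le_of_hasGradientAt (hf : ConvexOn ℝ univ f) {a : F}
    (hg : HasGradientAt f g a) (w : F) : f a + ⟪g, w - a⟫ ≤ f w := by
  have hline : ConvexOn ℝ univ (fun t : ℝ => f (a + t • (w - a))) := by
    simpa [Function.comp_def, AffineMap.lineMap_apply, add_comm] using
      hf.comp_affineMap (AffineMap.lineMap a w)
  have := hline.le_slope_of_hasDerivAt (mem_univ 0) (mem_univ 1) one_pos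
    (HasGradientAt.hasDerivAt_comp_add_smul (t := 0) (by simpa using hg))
  simp only [slope_def_field, one_smul, add_sub_cancel, zero_smul, add_zero, sub_zero, div_one]
    at this
  linarith

theorem image_add_le_of_lipschitz_gradient (hf : ∀ y, HasGradientAt f (f' y) y)
    (hLip : ∀ y w, ‖f' y - f' w‖ ≤ L * ‖y - w‖) (a v : F) :
    f (a + v) ≤ f a + ⟪f' a, v⟫ + L / 2 * ‖v‖ ^ 2 := by
  have hφ (t : ℝ) : HasDerivAt (fun s : ℝ => f (a + s • v)) ⟪f' (a + t • v), v⟫ t :=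
    (hf _).hasDerivAt_comp_add_smul
  have hB (t : ℝ) : HasDerivAt (fun s : ℝ => f a + s * ⟪f' a, v⟫ + L / 2 * s ^ 2 * ‖v‖ ^ 2)
      (⟪f' a, v⟫ + L * t * ‖v‖ ^ 2) t := by
    have hlin := ((hasDerivAt_id' t).mul_const ⟪f' a, v⟫).const_add (f a)
    have hquad := ((hasDerivAt_pow 2 t).const_mul (L / 2)).mul_const (‖v‖ ^ 2)
    exact (hlin.add hquad).congr_deriv (by push_cast; ring)
  have hderiv : ∀ t ∈ Ico (0 : ℝ) 1, ⟪f' (a + t • v), v⟫ ≤ ⟪f' a, v⟫ + L * t * ‖v‖ ^ 2 := by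
    intro t ht
    have : ⟪f' (a + t • v) - f' a, v⟫ ≤ L * t * ‖v‖ ^ 2 :=
      calc ⟪f' (a + t • v) - f' a, v⟫ ≤ ‖f' (a + t • v) - f' a‖ * ‖v‖ := real_inner_le_norm _ _
        _ ≤ L * ‖t • v‖ * ‖v‖ := by gcongr; simpa using hLip (a + t • v) a
        _ = L * t * ‖v‖ ^ 2 := by rw [norm_smul, Real.norm_of_nonneg ht.1]; ring
    rw [inner_sub_left] at this
    linarith
  have := image_le_of_deriv_right_le_deriv_boundary
    (fun t _ => (hφ t).continuousAt.continuousWithinAt)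
    (fun t _ => (hφ t).hasDerivWithinAt) (by simp)
    (fun t _ => (hB t).continuousAt.continuousWithinAt)
    (fun t _ => (hB t).hasDerivWithinAt) hderiv (right_mem_Icc.mpr zero_le_one)
  simpa using this

theorem le_sub_sq_norm_gradient_of_lipschitz_gradient (hL : 0 < L)
    (hf : ∀ y, HasGradientAt f (f' y) y) (hLip : ∀ y w, ‖f' y - f' w‖ ≤ L * ‖y - w‖)
    {m : ℝ} (hm : ∀ w, m ≤ f w) (u : F) : m ≤ f u - 1 / (2 * L) * ‖f' u‖ ^ 2 := by
  have hstep := image_add_le_of_lipschitz_gradient hf hLip u (-(1 / L) • f' u)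
  rw [inner_smul_right, real_inner_self_eq_norm_sq, norm_smul, mul_pow, Real.norm_eq_abs,
    sq_abs] at hstep
  have : f u + -(1 / L) * ‖f' u‖ ^ 2 + L / 2 * ((-(1 / L)) ^ 2 * ‖f' u‖ ^ 2)
      = f u - 1 / (2 * L) * ‖f' u‖ ^ 2 := by
    field_simp; ring
  linarith [hm (u + -(1 / L) • f' u)]

theorem ConvexOn.add_inner_add_sq_le_of_lipschitz_gradient (hconv : ConvexOn ℝ univ f)
    (hL : 0 < L) (hf : ∀ y, HasGradientAt f (f' y) y)
    (hLip : ∀ y w, ‖f' y - f' w‖ ≤ L * ‖y - w‖) (u y : F) :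
    f y + ⟪f' y, u - y⟫ + 1 / (2 * L) * ‖f' u - f' y‖ ^ 2 ≤ f u := by
  have hφ := le_sub_sq_norm_gradient_of_lipschitz_gradient (f := fun w => f w - ⟪f' y, w⟫) hL
    (fun w => (hf w).sub_inner_const (f' y)) (by simpa using hLip)
    (m := f y - ⟪f' y, y⟫) (fun w => ?_) u
  · rw [inner_sub_right]
    linarith
  · have := hconv.add_inner_le_of_hasGradientAt (hf y) w
    rw [inner_sub_right] at this
    linarith

end Gradient

theorem ogm_potential_le {x x' z z' xstar x₀ gx gx' : F} {fx fx' fstar τ δ L : ℝ}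
    (hL : 0 < L) (hτ : 0 < τ) (hδ : 0 ≤ δ) (hδsq : δ ^ 2 = τ + δ)
    (hpre : fx - 1 / (2 * L) * ‖gx‖ ^ 2 - fstar + L / (2 * τ) * ‖z - xstar‖ ^ 2
      ≤ L / (2 * τ) * ‖x₀ - xstar‖ ^ 2)
    (hstar : fx' + ⟪gx', xstar - x'⟫ + 1 / (2 * L) * ‖gx'‖ ^ 2 ≤ fstar)
    (hprev : fx' + ⟪gx', x - x'⟫ + 1 / (2 * L) * ‖gx - gx'‖ ^ 2 ≤ fx)
    (hx' : x' = (τ / (τ + δ)) • (x - (1 / L) • gx) + (δ / (τ + δ)) • z)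
    (hz' : z' = z - (δ / L) • gx') :
    fx' - fstar + L / (2 * (τ + δ)) * ‖z' - xstar‖ ^ 2
      ≤ L / (2 * (τ + δ)) * ‖x₀ - xstar‖ ^ 2 := by
  have hs : 0 < τ + δ := by positivity
  have hcomb : (τ + δ) • x' = τ • (x - (1 / L) • gx) + δ • z := by
    rw [hx', smul_add, smul_smul, smul_smul, mul_div_cancel₀ _ hs.ne', mul_div_cancel₀ _ hs.ne']
  have hinner : ⟪gx', τ • (x - (1 / L) • gx) + δ • z - (τ + δ) • x'⟫ = 0 := by
    rw [hcomb, sub_self, inner_zero_right]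
  have hz'sq : ‖z' - xstar‖ ^ 2
      = ‖z - xstar‖ ^ 2 - 2 * (δ / L) * ⟪gx', z - xstar⟫ + (δ / L) ^ 2 * ‖gx'‖ ^ 2 := by
    rw [hz', sub_right_comm, norm_sub_sq_real, real_inner_smul_right, real_inner_comm, norm_smul,
      mul_pow, Real.norm_eq_abs, sq_abs]
    ring
  rw [hz'sq]
  rw [norm_sub_sq_real] at hprev
  simp only [inner_sub_right, inner_add_right, inner_smul_right, real_inner_comm gx gx']
    at hinner hstar hprev ⊢
  linear_combination (norm := skip) (τ / (τ + δ)) * hpre + (δ / (τ + δ)) * hstar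
    + (τ / (τ + δ)) * hprev - (1 / (τ + δ)) * hinner + ‖gx'‖ ^ 2 / (2 * L * (τ + δ)) * hδsq
  apply le_of_eq
  field_simp
  ring

theorem ogm_induction_rate {d : ℕ} (L : ℝ) (hL : 0 < L)
    (f : EuclideanSpace ℝ (Fin d) → ℝ)
    (f' : EuclideanSpace ℝ (Fin d) → EuclideanSpace ℝ (Fin d))
    (hconv : ConvexOn ℝ Set.univ f)
    (hdiff : ∀ y, HasGradientAt f (f' y) y)
    (hsmooth : ∀ y w, ‖f' y - f' w‖ ≤ L * ‖y - w‖)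
    (xstar : EuclideanSpace ℝ (Fin d)) (hmin : ∀ y, f xstar ≤ f y)
    (x₀ x z : EuclideanSpace ℝ (Fin d)) (τ : ℝ) (hτ : 0 < τ)
    (haux : (f x - (1 / (2 * L)) * ‖f' x‖ ^ 2) - f xstar
              + L / (2 * τ) * ‖z - xstar‖ ^ 2 ≤ L / (2 * τ) * ‖x₀ - xstar‖ ^ 2)
    (δ τ' : ℝ) (hδ : δ = (1 + Real.sqrt (1 + 4 * τ)) / 2) (hτ' : τ' = τ + δ)
    (x' z' : EuclideanSpace ℝ (Fin d))
    (hx' : x' = (τ / τ') • (x - (1 / L) • f' x) + (δ / τ') • z)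
    (hz' : z' = z - (δ / L) • f' x') :
    (f x' - f xstar + L / (2 * τ') * ‖z' - xstar‖ ^ 2
        ≤ L / (2 * τ') * ‖x₀ - xstar‖ ^ 2) ∧
      f x' - f xstar ≤ L / (2 * τ') * ‖x₀ - xstar‖ ^ 2 := by
  subst hτ'
  have hδ₀ : 0 ≤ δ := by rw [hδ]; positivity
  have hδsq : δ ^ 2 = τ + δ := by rw [hδ]; exact one_add_sqrt_div_two_sq (by linarith)
  have hgrad_star : f' xstar = 0 :=
    IsLocalMin.hasGradientAt_eq_zero (Filter.Eventually.of_forall hmin) (hdiff xstar)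
  have hstar := hconv.add_inner_add_sq_le_of_lipschitz_gradient hL hdiff hsmooth xstar x'
  rw [hgrad_star, zero_sub, norm_neg] at hstar
  have hrate := ogm_potential_le hL hτ hδ₀ hδsq haux hstar
    (hconv.add_inner_add_sq_le_of_lipschitz_gradient hL hdiff hsmooth x x') hx' hz'
  have hdist : 0 ≤ L / (2 * (τ + δ)) * ‖z' - xstar‖ ^ 2 :=
    mul_nonneg (div_nonneg hL.le (by linarith)) (sq_nonneg _)
  exact ⟨hrate, by linarith⟩
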